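/- For θ ∈ T^high = [-π/2, 3π/2)² \ [-π/2, π/2)², the function r(θ₁, θ₂) = (1/4)(4 + 2cos θ₁ + 2cos θ₂ + cos θ₁ cos θ₂) attains minimum value 1/4 and maximum value 3/2 (i.e., its range of extreme values is exactly {1/4, 3/2}, with inf = 1/4 and sup = 3/2). -/
import Mathlib


open Real Set

noncomputable def Thigh : Set (ℝ × ℝ) :=
  (Ico (-(π/2)) (3*π/2) ×ˢ Ico (-(π/2)) (3*π/2)) \
  (Ico (-(π/2)) (π/2) ×ˢ Ico (-(π/2)) (π/2))

noncomputable def r (θ : ℝ × ℝ) : ℝ :=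
  1/4 * (4 + 2*cos θ.1 + 2*cos θ.2 + cos θ.1 * cos θ.2)

/-- On T^high the ratio r attains minimum 1/4 and maximum 3/2. -/
theorem stmt2 :
    IsLeast (r '' Thigh) (1/4) ∧ IsGreatest (r '' Thigh) (3/2) := by
  have hpi := pi_pos
  constructor
  · constructor
    · refine ⟨(π, π), ⟨⟨⟨by linarith, by linarith⟩, ⟨by linarith, by linarith⟩⟩, ?_⟩, ?_⟩
      · intro h
        have := h.1.2
        simp only at this
        linarith
      · simp [r, Real.cos_pi]; ring
    · rintro y ⟨θ, hθ, rfl⟩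
      have h1 := Real.neg_one_le_cos θ.1
      have h2 := Real.neg_one_le_cos θ.2
      simp only [r]
      nlinarith [mul_nonneg (by linarith : (0:ℝ) ≤ 1 + cos θ.1) (by linarith : (0:ℝ) ≤ 1 + cos θ.2)]
  · constructor
    · refine ⟨(0, π/2), ⟨⟨⟨by linarith, by linarith⟩, ⟨by linarith, by linarith⟩⟩, ?_⟩, ?_⟩
      · intro h
        have := h.2.2
        simp only at this
        linarith
      · simp [r, Real.cos_pi_div_two]; ring
    · rintro y ⟨θ, hθ, rfl⟩
      obtain ⟨⟨⟨ha1, ha2⟩, ⟨hb1, hb2⟩⟩, hnot⟩ := hθ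
      have h1 := Real.neg_one_le_cos θ.1
      have h2 := Real.neg_one_le_cos θ.2
      have h1' := Real.cos_le_one θ.1
      have h2' := Real.cos_le_one θ.2
      have hcase : π/2 ≤ θ.1 ∨ π/2 ≤ θ.2 := by
        by_contra h
        push_neg at h
        exact hnot ⟨⟨ha1, h.1⟩, ⟨hb1, h.2⟩⟩
      simp only [r]
      rcases hcase with hc | hc
      · have : cos θ.1 ≤ 0 :=
          Real.cos_nonpos_of_pi_div_two_le_of_le hc (by linarith)
        nlinarith
      · have : cos θ.2 ≤ 0 :=
          Real.cos_nonpos_of_pi_div_two_le_of_le hc (by linarith)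
        nlinarith
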